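/- arXiv:2309.08224 — 6 statements merged into one kernel-verified Lean document; each statement's English description precedes it below -/
import Mathlib

section
/- Let H : ℝ → ℝ be continuous and coercive and F0 : ℝ → ℝ be continuous, non-increasing and semi-coercive. Then the sub-relaxation R̲F0 and the super-relaxation R̄F0 are continuous, non-increasing and semi-coercive; they satisfy the pointwise inequalities min(F0, H) ≤ R̲F0 ≤ F0 ≤ R̄F0 ≤ max(F0, H); and both operators are idempotent: R̲(R̲F0) = R̲F0 and R̄(R̄F0) = R̄F0. -/
open Set Filter

attribute [local instance] Classical.propDecidable

noncomputable section

/-- `H` is coercive: `H p → +∞` as `|p| → +∞`. -/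
def Coercive (H : ℝ → ℝ) : Prop := Tendsto H (cocompact ℝ) atTop

/-- `F` is semi-coercive: `F p → +∞` as `p → -∞`. -/
def SemiCoercive (F : ℝ → ℝ) : Prop := Tendsto F atBot atTop

/-- Sub-relaxation: `(R̲F)(p) = sup_{q ≥ p} min (F q) (H q)`. -/
def subR (H F : ℝ → ℝ) (p : ℝ) : ℝ := sSup ((fun q => min (F q) (H q)) '' Ici p)

/-- Super-relaxation: `(R̄F)(p) = inf_{q ≤ p} max (F q) (H q)`. -/
def supR (H F : ℝ → ℝ) (p : ℝ) : ℝ := sInf ((fun q => max (F q) (H q)) '' Iic p)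

/-- Relaxation operator: `R̲F` where `F ≥ H`, `R̄F` where `F ≤ H`. -/
def relax (H F : ℝ → ℝ) (p : ℝ) : ℝ := if H p ≤ F p then subR H F p else supR H F p

/-- `p` is a negative characteristic point of `F` relative to `H`. -/
def negChar (H F : ℝ → ℝ) (p : ℝ) : Prop :=
  H p = F p ∧ ∃ ε > 0, ∀ q ∈ Ioo (p - ε) p, H q < H p

/-- `p` is a positive characteristic point of `F` relative to `H`. -/
def posChar (H F : ℝ → ℝ) (p : ℝ) : Prop :=
  H p = F p ∧ ∃ ε > 0, ∀ q ∈ Ioo p (p + ε), H p < H q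

/-- The upper point `p⁺ ∈ ℝ ∪ {+∞}` associated with `p` and `H`. -/
def upperPt (H : ℝ → ℝ) (p : ℝ) : EReal :=
  if ∀ ε > 0, ∃ q, p < q ∧ q < p + ε ∧ H q ≤ H p then (p : EReal)
  else sSup ((fun q : ℝ => (q : EReal)) '' {q : ℝ | p < q ∧ ∀ r ∈ Ioo p q, H p < H r})

/-- The lower point `p⁻` associated with `p` and `H`. -/
def lowerPt (H : ℝ → ℝ) (p : ℝ) : ℝ :=
  if ∀ ε > 0, ∃ q, p - ε < q ∧ q < p ∧ H p ≤ H q then p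
  else sInf {q : ℝ | q < p ∧ ∀ r ∈ Ioo q p, H r < H p}

/-- `p` is a positive limiter point of `F`. -/
def posLimiter (H F : ℝ → ℝ) (p : ℝ) : Prop :=
  (p : EReal) < upperPt H p ∧ F p ≤ H p ∧
    ∀ q : ℝ, H q < H p → F q ≤ H q →
      {r : ℝ | lowerPt H q < r ∧ (r : EReal) < upperPt H q} ∩
        {r : ℝ | p < r ∧ (r : EReal) < upperPt H p} = ∅

/-- `p` is a negative limiter point of `F`. -/
def negLimiter (H F : ℝ → ℝ) (p : ℝ) : Prop :=
  lowerPt H p < p ∧ H p ≤ F p ∧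
    ∀ q : ℝ, H q ≤ F q → H p < H q →
      {r : ℝ | lowerPt H q < r ∧ (r : EReal) < upperPt H q} ∩ Ioo (lowerPt H p) p = ∅

/-- The Godunov flux associated with `H`. -/
def godunov (H : ℝ → ℝ) (q p : ℝ) : ℝ :=
  if p ≤ q then sSup (H '' Icc p q) else sInf (H '' Icc q p)

/-- The lower (set-valued) Godunov semi-flux `G̲(q,p)`, as a subset of the extended reals. -/
def subG (H : ℝ → ℝ) (q p : ℝ) : Set EReal :=
  if q < p then {⊥}
  else if q = p then Iic ((H p : ℝ) : EReal)
  else {((godunov H q p : ℝ) : EReal)}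

/-- The upper (set-valued) Godunov semi-flux `Ḡ(q,p)`, as a subset of the extended reals. -/
def supG (H : ℝ → ℝ) (q p : ℝ) : Set EReal :=
  if q < p then {((godunov H q p : ℝ) : EReal)}
  else if q = p then Ici ((H p : ℝ) : EReal)
  else {⊤}


/-! The sub-relaxation is the running supremum `p ↦ sup_{q ≥ p} g q` of the continuous function
`g = min F0 H`, bounded above on `[p, ∞)` by `F0 p` since `F0` is non-increasing. Such a running
supremum is non-increasing and has no jumps: moving `p` slightly to the left only adds values of `g`
close to `g p`, and moving it slightly to the right keeps a value of `g` close to the supremum, which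
is nearly attained at some `q ≥ p` and hence, by continuity, also at some point beyond `q`. The bounds
`min F0 H ≤ R̲F0 ≤ F0` give semi-coercivity, and idempotence because `min F0 H ≤ min (R̲F0) H`.
The super-relaxation is the order dual. -/

section RunningExtrema

variable {α β : Type*} [LinearOrder α] [ConditionallyCompleteLinearOrder β] {g : α → β}

lemma le_csSup_image_Ici {p q : α} (hb : BddAbove (g '' Ici p)) (hpq : p ≤ q) :
    g q ≤ sSup (g '' Ici p) :=
  le_csSup hb (mem_image_of_mem g hpq)

lemma antitone_csSup_image_Ici (hb : ∀ p, BddAbove (g '' Ici p)) :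
    Antitone fun p => sSup (g '' Ici p) := fun p _ hpp' =>
  csSup_le_csSup (hb p) (nonempty_Ici.image g) (image_mono (Ici_subset_Ici.2 hpp'))

lemma continuous_csSup_image_Ici [TopologicalSpace α] [OrderTopology α] [DenselyOrdered α]
    [NoMinOrder α] [NoMaxOrder α] [TopologicalSpace β] [OrderTopology β] [DenselyOrdered β]
    (hg : Continuous g) (hb : ∀ p, BddAbove (g '' Ici p)) :
    Continuous fun p => sSup (g '' Ici p) := by
  set s := fun p => sSup (g '' Ici p)
  have hs : Antitone s := antitone_csSup_image_Ici hb
  refine continuous_iff_continuousAt.2 fun x => tendsto_order.2 ⟨fun c hc => ?_, fun c hc => ?_⟩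
  · obtain ⟨_, ⟨q, hxq, rfl⟩, hcq⟩ := exists_lt_of_lt_csSup (nonempty_Ici.image g) hc
    obtain ⟨u, hqu, hu⟩ :=
      exists_Ico_subset_of_mem_nhds (hg.continuousAt.eventually (lt_mem_nhds hcq)) (exists_gt q)
    obtain ⟨q', hqq', hq'u⟩ := exists_between hqu
    filter_upwards [Iio_mem_nhds (hxq.trans_lt hqq')] with p hp
    exact (hu ⟨hqq'.le, hq'u⟩).trans_le (le_csSup_image_Ici (hb p) hp.le)
  · obtain ⟨c', hxc', hc'c⟩ := exists_between hc
    have hgx : g x < c' := (le_csSup_image_Ici (hb x) le_rfl).trans_lt hxc'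
    obtain ⟨l, hlx, hl⟩ :=
      exists_Ioc_subset_of_mem_nhds (hg.continuousAt.eventually (gt_mem_nhds hgx)) (exists_lt x)
    obtain ⟨p₀, hlp₀, hp₀x⟩ := exists_between hlx
    have hp₀ : s p₀ ≤ c' := by
      refine csSup_le (nonempty_Ici.image g) (forall_mem_image.2 fun q hq => ?_)
      rcases le_total q x with hqx | hxq
      · exact (hl ⟨hlp₀.trans_le hq, hqx⟩).le
      · exact (le_csSup_image_Ici (hb x) hxq).trans hxc'.le
    filter_upwards [Ioi_mem_nhds hp₀x] with p hp
    exact ((hs hp.le).trans hp₀).trans_lt hc'c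

lemma csInf_image_Iic_le {p q : α} (hb : BddBelow (g '' Iic p)) (hqp : q ≤ p) :
    sInf (g '' Iic p) ≤ g q :=
  le_csSup_image_Ici (α := αᵒᵈ) (β := βᵒᵈ) hb hqp

lemma antitone_csInf_image_Iic (hb : ∀ p, BddBelow (g '' Iic p)) :
    Antitone fun p => sInf (g '' Iic p) := fun _ _ hpp' =>
  antitone_csSup_image_Ici (α := αᵒᵈ) (β := βᵒᵈ) hb hpp'

lemma continuous_csInf_image_Iic [TopologicalSpace α] [OrderTopology α] [DenselyOrdered α]
    [NoMinOrder α] [NoMaxOrder α] [TopologicalSpace β] [OrderTopology β] [DenselyOrdered β]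
    (hg : Continuous g) (hb : ∀ p, BddBelow (g '' Iic p)) :
    Continuous fun p => sInf (g '' Iic p) :=
  continuous_csSup_image_Ici (α := αᵒᵈ) (β := βᵒᵈ) hg hb

end RunningExtrema

lemma Coercive.tendsto_atBot {H : ℝ → ℝ} (hH : Coercive H) : Tendsto H atBot atTop :=
  hH.mono_left atBot_le_cocompact

section SubRelaxation

variable {H F : ℝ → ℝ}

lemma bddAbove_min_image_Ici (hF : Antitone F) (p : ℝ) :
    BddAbove ((fun q => min (F q) (H q)) '' Ici p) :=
  ⟨F p, forall_mem_image.2 fun _ hq => (min_le_left _ _).trans (hF hq)⟩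

lemma min_le_subR (hF : Antitone F) {p q : ℝ} (hpq : p ≤ q) : min (F q) (H q) ≤ subR H F p :=
  le_csSup_image_Ici (bddAbove_min_image_Ici hF p) hpq

lemma subR_le (hF : Antitone F) (p : ℝ) : subR H F p ≤ F p :=
  csSup_le (nonempty_Ici.image _) (forall_mem_image.2 fun _ hq => (min_le_left _ _).trans (hF hq))

lemma antitone_subR (hF : Antitone F) : Antitone (subR H F) :=
  antitone_csSup_image_Ici (bddAbove_min_image_Ici hF)

lemma continuous_subR (hH : Continuous H) (hF : Continuous F) (hFa : Antitone F) :
    Continuous (subR H F) :=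
  continuous_csSup_image_Ici (hF.min hH) (bddAbove_min_image_Ici hFa)

lemma tendsto_subR_atBot (hH : Tendsto H atBot atTop) (hF : Tendsto F atBot atTop)
    (hFa : Antitone F) : Tendsto (subR H F) atBot atTop :=
  tendsto_atTop_mono (fun _ => min_le_subR hFa le_rfl) (tendsto_inf_atTop _ hF hH)

lemma subR_subR (hF : Antitone F) : subR H (subR H F) = subR H F := by
  funext p
  refine le_antisymm (subR_le (antitone_subR hF) p) ?_
  refine csSup_le (nonempty_Ici.image _) (forall_mem_image.2 fun q hq => ?_)
  calc min (F q) (H q) ≤ min (subR H F q) (H q) := le_min (min_le_subR hF le_rfl) (min_le_right _ _)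
    _ ≤ subR H (subR H F) p := min_le_subR (antitone_subR hF) hq

end SubRelaxation

section SuperRelaxation

variable {H F : ℝ → ℝ}

lemma bddBelow_max_image_Iic (hF : Antitone F) (p : ℝ) :
    BddBelow ((fun q => max (F q) (H q)) '' Iic p) :=
  ⟨F p, forall_mem_image.2 fun _ hq => (hF hq).trans (le_max_left _ _)⟩

lemma supR_le_max (hF : Antitone F) {p q : ℝ} (hqp : q ≤ p) : supR H F p ≤ max (F q) (H q) :=
  csInf_image_Iic_le (bddBelow_max_image_Iic hF p) hqp

lemma le_supR (hF : Antitone F) (p : ℝ) : F p ≤ supR H F p :=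
  le_csInf (nonempty_Iic.image _) (forall_mem_image.2 fun _ hq => (hF hq).trans (le_max_left _ _))

lemma antitone_supR (hF : Antitone F) : Antitone (supR H F) :=
  antitone_csInf_image_Iic (bddBelow_max_image_Iic hF)

lemma continuous_supR (hH : Continuous H) (hF : Continuous F) (hFa : Antitone F) :
    Continuous (supR H F) :=
  continuous_csInf_image_Iic (hF.max hH) (bddBelow_max_image_Iic hFa)

lemma tendsto_supR_atBot (hF : Tendsto F atBot atTop) (hFa : Antitone F) :
    Tendsto (supR H F) atBot atTop :=
  tendsto_atTop_mono (le_supR hFa) hF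

lemma supR_supR (hF : Antitone F) : supR H (supR H F) = supR H F := by
  funext p
  refine le_antisymm ?_ (le_supR (antitone_supR hF) p)
  refine le_csInf (nonempty_Iic.image _) (forall_mem_image.2 fun q hq => ?_)
  calc supR H (supR H F) p ≤ max (supR H F q) (H q) := supR_le_max (antitone_supR hF) hq
    _ ≤ max (F q) (H q) := max_le (supR_le_max hF le_rfl) (le_max_right _ _)

end SuperRelaxation

/-- First properties of the operators `R̲` and `R̄`. -/
theorem first_properties_of_relaxations (H F0 : ℝ → ℝ)
    (hH : Continuous H) (hHc : Coercive H)
    (hF : Continuous F0) (hFa : Antitone F0) (hFs : SemiCoercive F0) :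
    (Continuous (subR H F0) ∧ Antitone (subR H F0) ∧ SemiCoercive (subR H F0)) ∧
    (Continuous (supR H F0) ∧ Antitone (supR H F0) ∧ SemiCoercive (supR H F0)) ∧
    (∀ p : ℝ, min (F0 p) (H p) ≤ subR H F0 p ∧ subR H F0 p ≤ F0 p ∧
      F0 p ≤ supR H F0 p ∧ supR H F0 p ≤ max (F0 p) (H p)) ∧
    subR H (subR H F0) = subR H F0 ∧ supR H (supR H F0) = supR H F0 :=
  ⟨⟨continuous_subR hH hF hFa, antitone_subR hFa, tendsto_subR_atBot hHc.tendsto_atBot hFs hFa⟩,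
    ⟨continuous_supR hH hF hFa, antitone_supR hFa, tendsto_supR_atBot hFs hFa⟩,
    fun p => ⟨min_le_subR hFa le_rfl, subR_le hFa p, le_supR hFa p, supR_le_max hFa le_rfl⟩,
    subR_subR hFa, supR_supR hFa⟩
end
end

section
/- Let H : ℝ → ℝ be continuous and coercive and F0 : ℝ → ℝ be continuous, non-increasing and semi-coercive, and set F := ℜF0. Then F is a fixed point of all three operators: R̲F = F = R̄F and ℜF = F. Moreover, for every p ∈ ℝ: if F0(p) ≤ H(p) then F0(p) ≤ (ℜF0)(p) ≤ H(p), and if F0(p) ≥ H(p) then H(p) ≤ (ℜF0)(p) ≤ F0(p); in particular |ℜF0 − H| ≤ |F0 − H| pointwise. -/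
open Set Filter

attribute [local instance] Classical.propDecidable

noncomputable section

/-!
For non-increasing `F`, the sub-relaxation at `p` is squeezed between `min (F p) (H p)` and
`F p`, and the super-relaxation between `F p` and `max (F p) (H p)`; hence `ℜF` lies between
`F` and `H`, and both relaxations equal `F` at a crossing point `F p = H p`. `ℜF` is again
non-increasing: where it switches from `R̄F` (left of the switch, `F < H`) to `R̲F`
(right of it, `F > H`), the intermediate value theorem gives a crossing point `r` in between,
and `R̄F ≤ F r = R̲F` across it. Finally `ℜF` is a fixed point: `min (ℜF) H` dominates
`min F H`, so `R̲(ℜF) ≥ R̲F = ℜF` where `ℜF > H`, and dually for `R̄`.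
-/

namespace Relaxation

variable {H F G : ℝ → ℝ} {p q : ℝ}

lemma bddAbove_image_min (hF : Antitone F) (p : ℝ) :
    BddAbove ((fun q => min (F q) (H q)) '' Ici p) := by
  refine ⟨F p, ?_⟩
  rintro _ ⟨q, hq, rfl⟩
  exact (min_le_left _ _).trans (hF hq)

lemma bddBelow_image_max (hF : Antitone F) (p : ℝ) :
    BddBelow ((fun q => max (F q) (H q)) '' Iic p) := by
  refine ⟨F p, ?_⟩
  rintro _ ⟨q, hq, rfl⟩
  exact (hF hq).trans (le_max_left _ _)

lemma subR_le (hF : Antitone F) (p : ℝ) : subR H F p ≤ F p :=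
  csSup_le (nonempty_Ici.image _) <| by
    rintro _ ⟨q, hq, rfl⟩
    exact (min_le_left _ _).trans (hF hq)

lemma le_supR (hF : Antitone F) (p : ℝ) : F p ≤ supR H F p :=
  le_csInf (nonempty_Iic.image _) <| by
    rintro _ ⟨q, hq, rfl⟩
    exact (hF hq).trans (le_max_left _ _)

lemma min_le_subR (hF : Antitone F) (p : ℝ) : min (F p) (H p) ≤ subR H F p :=
  le_csSup (bddAbove_image_min hF p) ⟨p, self_mem_Ici, rfl⟩

lemma supR_le_max (hF : Antitone F) (p : ℝ) : supR H F p ≤ max (F p) (H p) :=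
  csInf_le (bddBelow_image_max hF p) ⟨p, self_mem_Iic, rfl⟩

lemma subR_antitone (hF : Antitone F) : Antitone (subR H F) := fun _ _ hpq =>
  csSup_le_csSup (bddAbove_image_min hF _) (nonempty_Ici.image _)
    (image_mono (Ici_subset_Ici.mpr hpq))

lemma supR_antitone (hF : Antitone F) : Antitone (supR H F) := fun _ _ hpq =>
  csInf_le_csInf (bddBelow_image_max hF _) (nonempty_Iic.image _)
    (image_mono (Iic_subset_Iic.mpr hpq))

lemma subR_le_supR (hF : Antitone F) (p : ℝ) : subR H F p ≤ supR H F p :=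
  (subR_le hF p).trans (le_supR hF p)

lemma subR_eq_of_eq (hF : Antitone F) (h : F p = H p) : subR H F p = F p :=
  le_antisymm (subR_le hF p) (by simpa [h] using min_le_subR (H := H) hF p)

lemma supR_eq_of_eq (hF : Antitone F) (h : F p = H p) : supR H F p = F p :=
  le_antisymm (by simpa [h] using supR_le_max (H := H) hF p) (le_supR hF p)

lemma subR_le_subR (hG : Antitone G) (hFG : ∀ q, min (F q) (H q) ≤ G q) (p : ℝ) :
    subR H F p ≤ subR H G p :=
  csSup_le (nonempty_Ici.image _) <| by
    rintro _ ⟨q, hq, rfl⟩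
    exact (le_min (hFG q) (min_le_right _ _)).trans
      (le_csSup (bddAbove_image_min hG p) ⟨q, hq, rfl⟩)

lemma supR_le_supR (hG : Antitone G) (hGF : ∀ q, G q ≤ max (F q) (H q)) (p : ℝ) :
    supR H G p ≤ supR H F p :=
  le_csInf (nonempty_Iic.image _) <| by
    rintro _ ⟨q, hq, rfl⟩
    exact (csInf_le (bddBelow_image_max hG p) ⟨q, hq, rfl⟩).trans
      (max_le (hGF q) (le_max_right _ _))

lemma relax_eq_subR (h : H p ≤ F p) : relax H F p = subR H F p := if_pos h

lemma relax_eq_supR (hF : Antitone F) (h : F p ≤ H p) : relax H F p = supR H F p := by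
  rcases h.lt_or_eq with hlt | heq
  · exact if_neg hlt.not_ge
  · rw [relax_eq_subR heq.ge, subR_eq_of_eq hF heq, supR_eq_of_eq hF heq]

lemma subR_le_relax (hF : Antitone F) (p : ℝ) : subR H F p ≤ relax H F p := by
  unfold relax
  split_ifs
  exacts [le_rfl, subR_le_supR hF p]

lemma relax_le_supR (hF : Antitone F) (p : ℝ) : relax H F p ≤ supR H F p := by
  unfold relax
  split_ifs
  exacts [subR_le_supR hF p, le_rfl]

lemma relax_mem_uIcc (hF : Antitone F) (p : ℝ) : relax H F p ∈ uIcc (H p) (F p) := by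
  rcases le_total (H p) (F p) with h | h
  · rw [uIcc_of_le h, relax_eq_subR h]
    exact ⟨by simpa [h] using min_le_subR (H := H) hF p, subR_le hF p⟩
  · rw [uIcc_of_ge h, relax_eq_supR hF h]
    exact ⟨le_supR hF p, by simpa [h] using supR_le_max (H := H) hF p⟩

lemma min_le_relax (hF : Antitone F) (p : ℝ) : min (F p) (H p) ≤ relax H F p := by
  simpa [min_comm] using (relax_mem_uIcc (H := H) hF p).1

lemma relax_le_max (hF : Antitone F) (p : ℝ) : relax H F p ≤ max (F p) (H p) := by
  simpa [max_comm] using (relax_mem_uIcc (H := H) hF p).2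

lemma exists_eq_of_lt_of_gt (hH : Continuous H) (hF : Continuous F) (hpq : p ≤ q)
    (hp : H p < F p) (hq : F q < H q) : ∃ r ∈ Icc p q, F r = H r := by
  obtain ⟨r, hr, hr0⟩ := intermediate_value_Icc' hpq (hF.sub hH).continuousOn
    (show (0 : ℝ) ∈ Icc (F q - H q) (F p - H p) from ⟨by linarith, by linarith⟩)
  exact ⟨r, hr, sub_eq_zero.mp hr0⟩

lemma relax_antitone (hH : Continuous H) (hF : Continuous F) (hFa : Antitone F) :
    Antitone (relax H F) := by
  intro p q hpq
  by_cases hq : H q ≤ F q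
  · calc relax H F q = subR H F q := relax_eq_subR hq
      _ ≤ subR H F p := subR_antitone hFa hpq
      _ ≤ relax H F p := subR_le_relax hFa p
  by_cases hp : F p ≤ H p
  · calc relax H F q ≤ supR H F q := relax_le_supR hFa q
      _ ≤ supR H F p := supR_antitone hFa hpq
      _ = relax H F p := (relax_eq_supR hFa hp).symm
  obtain ⟨r, ⟨hpr, hrq⟩, hr⟩ :=
    exists_eq_of_lt_of_gt hH hF hpq (not_le.mp hp) (not_le.mp hq)
  calc relax H F q ≤ supR H F q := relax_le_supR hFa q
    _ ≤ supR H F r := supR_antitone hFa hrq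
    _ = subR H F r := by rw [supR_eq_of_eq hFa hr, subR_eq_of_eq hFa hr]
    _ ≤ subR H F p := subR_antitone hFa hpr
    _ ≤ relax H F p := subR_le_relax hFa p

lemma subR_relax (hH : Continuous H) (hF : Continuous F) (hFa : Antitone F) :
    subR H (relax H F) = relax H F := by
  have hR := relax_antitone hH hF hFa
  funext p
  refine le_antisymm (subR_le hR p) ?_
  by_cases h : relax H F p ≤ H p
  · simpa [h] using min_le_subR (H := H) hR p
  have hHF : H p ≤ F p := by
    by_contra! hlt
    exact h ((relax_le_max hFa p).trans (max_eq_right hlt.le).le)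
  calc relax H F p = subR H F p := relax_eq_subR hHF
    _ ≤ subR H (relax H F) p := subR_le_subR hR (min_le_relax hFa) p

lemma supR_relax (hH : Continuous H) (hF : Continuous F) (hFa : Antitone F) :
    supR H (relax H F) = relax H F := by
  have hR := relax_antitone hH hF hFa
  funext p
  refine le_antisymm ?_ (le_supR hR p)
  by_cases h : H p ≤ relax H F p
  · simpa [h] using supR_le_max (H := H) hR p
  have hFH : F p ≤ H p := by
    by_contra! hlt
    exact h ((min_eq_right hlt.le).ge.trans (min_le_relax hFa p))
  calc supR H (relax H F) p ≤ supR H F p := supR_le_supR hR (relax_le_max hFa) p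
    _ = relax H F p := (relax_eq_supR hFa hFH).symm

lemma relax_relax (hH : Continuous H) (hF : Continuous F) (hFa : Antitone F) :
    relax H (relax H F) = relax H F := by
  funext p
  by_cases h : H p ≤ relax H F p
  · rw [relax_eq_subR h, subR_relax hH hF hFa]
  · rw [relax, if_neg h, supR_relax hH hF hFa]

end Relaxation

open Relaxation in
theorem relax_fixed_point_and_between_general (H F0 : ℝ → ℝ)
    (hH : Continuous H)
    (hF : Continuous F0) (hFa : Antitone F0) :
    subR H (relax H F0) = relax H F0 ∧
    supR H (relax H F0) = relax H F0 ∧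
    relax H (relax H F0) = relax H F0 ∧
    (∀ p : ℝ,
      (F0 p ≤ H p → F0 p ≤ relax H F0 p ∧ relax H F0 p ≤ H p) ∧
      (H p ≤ F0 p → H p ≤ relax H F0 p ∧ relax H F0 p ≤ F0 p) ∧
      |relax H F0 p - H p| ≤ |F0 p - H p|) := by
  refine ⟨subR_relax hH hF hFa, supR_relax hH hF hFa, relax_relax hH hF hFa,
    fun p => ⟨fun h => ?_, fun h => ?_, abs_sub_left_of_mem_uIcc (relax_mem_uIcc hFa p)⟩⟩
  · simpa [uIcc_of_ge h] using relax_mem_uIcc (H := H) hFa p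
  · simpa [uIcc_of_le h] using relax_mem_uIcc (H := H) hFa p

/-- `ℜF0` is a fixed point of all three operators, and is between `F0` and `H`. -/
theorem relax_fixed_point_and_between (H F0 : ℝ → ℝ)
    (hH : Continuous H) (hHc : Coercive H)
    (hF : Continuous F0) (hFa : Antitone F0) (hFs : SemiCoercive F0) :
    subR H (relax H F0) = relax H F0 ∧
    supR H (relax H F0) = relax H F0 ∧
    relax H (relax H F0) = relax H F0 ∧
    (∀ p : ℝ,
      (F0 p ≤ H p → F0 p ≤ relax H F0 p ∧ relax H F0 p ≤ H p) ∧
      (H p ≤ F0 p → H p ≤ relax H F0 p ∧ relax H F0 p ≤ F0 p) ∧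
      |relax H F0 p - H p| ≤ |F0 p - H p|) :=
  relax_fixed_point_and_between_general H F0 hH hF hFa
end
end

section
/- Let H : ℝ → ℝ be continuous and coercive and F0 : ℝ → ℝ be continuous, non-increasing and semi-coercive. Let H₋(p) := inf_{q ≤ p} H(q) be the lower non-increasing envelope of H, and set F1 := max(F0, H₋). Then F1 is continuous, non-increasing and semi-coercive, and ℜF1 = ℜF0. -/
open Set Filter

attribute [local instance] Classical.propDecidable

noncomputable section

namespace RelaxAux

variable {H : ℝ → ℝ}

lemma tendsto_atBot' (hHc : Coercive H) : Tendsto H atBot atTop :=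
  hHc.mono_left (by rw [cocompact_eq_atBot_atTop]; exact le_sup_left)

lemma exists_min (hH : Continuous H) (hHc : Coercive H) (p : ℝ) :
    ∃ x ≤ p, ∀ r ≤ p, H x ≤ H r := by
  obtain ⟨a, ha⟩ := eventually_atBot.mp ((tendsto_atBot' hHc).eventually_ge_atTop (H p))
  obtain ⟨x, hx, hmin⟩ := isCompact_Icc.exists_isMinOn
    ⟨p, min_le_right a p, le_refl p⟩ hH.continuousOn
  refine ⟨x, hx.2, fun r hr => ?_⟩
  rcases le_or_gt (min a p) r with h | h
  · exact hmin ⟨h, hr⟩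
  · have hra : r ≤ a := le_of_lt (lt_of_lt_of_le h (min_le_left a p))
    exact le_trans (hmin ⟨min_le_right a p, le_refl p⟩) (ha r hra)

lemma sInf_attained (hH : Continuous H) (hHc : Coercive H) (p : ℝ) :
    ∃ x ≤ p, H x = sInf (H '' Iic p) ∧ ∀ r ≤ p, sInf (H '' Iic p) ≤ H r := by
  obtain ⟨x, hxp, hmin⟩ := exists_min hH hHc p
  have hbdd : BddBelow (H '' Iic p) := ⟨H x, by rintro _ ⟨r, hr, rfl⟩; exact hmin r hr⟩
  have hle : sInf (H '' Iic p) ≤ H x := csInf_le hbdd ⟨x, hxp, rfl⟩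
  have hge : H x ≤ sInf (H '' Iic p) :=
    le_csInf ⟨H p, p, self_mem_Iic, rfl⟩ (by rintro _ ⟨r, hr, rfl⟩; exact hmin r hr)
  have heq : H x = sInf (H '' Iic p) := le_antisymm hge hle
  exact ⟨x, hxp, heq, fun r hr => heq ▸ hmin r hr⟩

lemma Hm_le (hH : Continuous H) (hHc : Coercive H) (p : ℝ) : sInf (H '' Iic p) ≤ H p := by
  obtain ⟨x, hx, heq, hall⟩ := sInf_attained hH hHc p
  exact hall p le_rfl

lemma Hm_anti (hH : Continuous H) (hHc : Coercive H) :
    Antitone (fun p => sInf (H '' Iic p)) := by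
  intro a b hab
  obtain ⟨x, hxa, hxeq, -⟩ := sInf_attained hH hHc a
  obtain ⟨y, hyb, hyeq, hyall⟩ := sInf_attained hH hHc b
  calc sInf (H '' Iic b) ≤ H x := hyall x (hxa.trans hab)
    _ = sInf (H '' Iic a) := hxeq

lemma Hm_cont (hH : Continuous H) (hHc : Coercive H) :
    Continuous (fun p => sInf (H '' Iic p)) := by
  rw [Metric.continuous_iff]
  intro p ε hε
  obtain ⟨δ, hδ, hball⟩ := Metric.continuous_iff.mp hH p (ε/2) (by linarith)
  refine ⟨δ, hδ, fun q hq => ?_⟩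
  obtain ⟨x, hxp, hxeq, hxmin⟩ := sInf_attained hH hHc p
  obtain ⟨y, hyq, hyeq, hymin⟩ := sInf_attained hH hHc q
  rw [Real.dist_eq] at hq ⊢
  rw [abs_sub_lt_iff]
  rcases le_total q p with h | h
  · -- q ≤ p, so Hm q ≥ Hm p
    have hBA : sInf (H '' Iic p) ≤ sInf (H '' Iic q) := Hm_anti hH hHc h
    have hA : sInf (H '' Iic q) < sInf (H '' Iic p) + ε := by
      rcases le_or_gt x q with hxq | hxq
      · have : sInf (H '' Iic q) ≤ H x := hymin x hxq
        rw [hxeq] at this; linarith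
      · -- q < x ≤ p
        have hxd : |x - p| < δ := by
          rw [abs_sub_lt_iff] at hq ⊢; constructor <;> linarith
        have h1 : |H x - H p| < ε/2 := by
          have := hball x (by rw [Real.dist_eq]; exact hxd)
          rwa [Real.dist_eq] at this
        have h2 : |H q - H p| < ε/2 := by
          have := hball q (by rw [Real.dist_eq]; exact hq)
          rwa [Real.dist_eq] at this
        have h3 : sInf (H '' Iic q) ≤ H q := hymin q le_rfl
        rw [abs_sub_lt_iff] at h1 h2
        rw [← hxeq]
        linarith
    constructor <;> linarith
  · -- p ≤ q, so Hm q ≤ Hm p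
    have hAB : sInf (H '' Iic q) ≤ sInf (H '' Iic p) := Hm_anti hH hHc h
    have hB : sInf (H '' Iic p) < sInf (H '' Iic q) + ε := by
      rcases le_or_gt y p with hyp | hyp
      · have : sInf (H '' Iic p) ≤ H y := hxmin y hyp
        rw [hyeq] at this; linarith
      · -- p < y ≤ q
        have hyd : |y - p| < δ := by
          rw [abs_sub_lt_iff] at hq ⊢; constructor <;> linarith
        have h1 : |H y - H p| < ε/2 := by
          have := hball y (by rw [Real.dist_eq]; exact hyd)
          rwa [Real.dist_eq] at this
        have h2 : sInf (H '' Iic p) ≤ H p := hxmin p le_rfl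
        rw [abs_sub_lt_iff] at h1
        rw [← hyeq]
        linarith
    constructor <;> linarith

end RelaxAux

open RelaxAux in
/-- The function `F1 = max (F0, H₋)` is continuous, non-increasing, semi-coercive,
and has the same relaxation as `F0`. -/
theorem relax_of_max_with_lower_envelope (H F0 : ℝ → ℝ)
    (hH : Continuous H) (hHc : Coercive H)
    (hF : Continuous F0) (hFa : Antitone F0) (hFs : SemiCoercive F0) :
    Continuous (fun p => max (F0 p) (sInf (H '' Iic p))) ∧
    Antitone (fun p => max (F0 p) (sInf (H '' Iic p))) ∧
    SemiCoercive (fun p => max (F0 p) (sInf (H '' Iic p))) ∧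
    relax H (fun p => max (F0 p) (sInf (H '' Iic p))) = relax H F0 := by
  have hmle : ∀ q, sInf (H '' Iic q) ≤ H q := Hm_le hH hHc
  have hmanti : Antitone (fun p => sInf (H '' Iic p)) := Hm_anti hH hHc
  have hF1anti : Antitone (fun p => max (F0 p) (sInf (H '' Iic p))) := hFa.max hmanti
  refine ⟨(hF.max (Hm_cont hH hHc)), hF1anti, tendsto_atTop_mono (fun p => le_max_left _ _) hFs, ?_⟩
  funext p
  simp only [relax, subR, supR]
  by_cases h1 : H p ≤ max (F0 p) (sInf (H '' Iic p))
  · rw [if_pos h1]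
    by_cases h0 : H p ≤ F0 p
    · rw [if_pos h0]
      have hne0 : ((fun q => min (F0 q) (H q)) '' Ici p).Nonempty := ⟨_, p, self_mem_Ici, rfl⟩
      have hbdd0 : BddAbove ((fun q => min (F0 q) (H q)) '' Ici p) :=
        ⟨F0 p, by rintro _ ⟨q, hq, rfl⟩; exact le_trans (min_le_left _ _) (hFa hq)⟩
      have hne1 : ((fun q => min (max (F0 q) (sInf (H '' Iic q))) (H q)) '' Ici p).Nonempty :=
        ⟨_, p, self_mem_Ici, rfl⟩
      have hbdd1 : BddAbove ((fun q => min (max (F0 q) (sInf (H '' Iic q))) (H q)) '' Ici p) :=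
        ⟨max (F0 p) (sInf (H '' Iic p)), by
          rintro _ ⟨q, hq, rfl⟩; exact le_trans (min_le_left _ _) (hF1anti hq)⟩
      apply le_antisymm
      · apply csSup_le hne1
        rintro _ ⟨q, hq, rfl⟩
        dsimp only
        rcases le_total (F0 q) (sInf (H '' Iic q)) with hc | hc
        · have h3 : min (F0 p) (H p) ≤ sSup ((fun q => min (F0 q) (H q)) '' Ici p) :=
            le_csSup hbdd0 ⟨p, self_mem_Ici, rfl⟩
          rw [min_eq_right h0] at h3
          calc min (max (F0 q) (sInf (H '' Iic q))) (H q)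
              ≤ max (F0 q) (sInf (H '' Iic q)) := min_le_left _ _
            _ = sInf (H '' Iic q) := max_eq_right hc
            _ ≤ sInf (H '' Iic p) := hmanti hq
            _ ≤ H p := hmle p
            _ ≤ _ := h3
        · rw [show min (max (F0 q) (sInf (H '' Iic q))) (H q) = min (F0 q) (H q) by
            rw [max_eq_left hc]]
          exact le_csSup hbdd0 ⟨q, hq, rfl⟩
      · apply csSup_le hne0
        rintro _ ⟨q, hq, rfl⟩
        exact le_trans (min_le_min (le_max_left _ _) le_rfl) (le_csSup hbdd1 ⟨q, hq, rfl⟩)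
    · rw [if_neg h0]
      push_neg at h0
      have hpm : H p ≤ sInf (H '' Iic p) := by
        rcases max_cases (F0 p) (sInf (H '' Iic p)) with ⟨he, hc⟩ | ⟨he, hc⟩
        · rw [he] at h1; linarith
        · rwa [he] at h1
      have hpm' : sInf (H '' Iic p) = H p := le_antisymm (hmle p) hpm
      have hF1p : max (F0 p) (sInf (H '' Iic p)) = H p := by
        rw [hpm', max_eq_right h0.le]
      have hne1 : ((fun q => min (max (F0 q) (sInf (H '' Iic q))) (H q)) '' Ici p).Nonempty :=
        ⟨_, p, self_mem_Ici, rfl⟩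
      have hbdd1 : BddAbove ((fun q => min (max (F0 q) (sInf (H '' Iic q))) (H q)) '' Ici p) :=
        ⟨max (F0 p) (sInf (H '' Iic p)), by
          rintro _ ⟨q, hq, rfl⟩; exact le_trans (min_le_left _ _) (hF1anti hq)⟩
      have hsub : sSup ((fun q => min (max (F0 q) (sInf (H '' Iic q))) (H q)) '' Ici p) = H p := by
        apply le_antisymm
        · apply csSup_le hne1
          rintro _ ⟨q, hq, rfl⟩
          dsimp only
          calc min (max (F0 q) (sInf (H '' Iic q))) (H q)
              ≤ max (F0 q) (sInf (H '' Iic q)) := min_le_left _ _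
            _ ≤ max (F0 p) (sInf (H '' Iic p)) := hF1anti hq
            _ = H p := hF1p
        · have := le_csSup hbdd1 ⟨p, self_mem_Ici, rfl⟩
          simp only [hF1p, min_self] at this
          exact this
      have hlow : ∀ q ∈ Iic p, H p ≤ max (F0 q) (H q) := by
        intro q hq
        obtain ⟨x, hxp, hxeq, hxall⟩ := sInf_attained hH hHc p
        calc H p = sInf (H '' Iic p) := hpm'.symm
          _ ≤ H q := hxall q hq
          _ ≤ max (F0 q) (H q) := le_max_right _ _
      have hsup : sInf ((fun q => max (F0 q) (H q)) '' Iic p) = H p := by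
        apply le_antisymm
        · have hmem : max (F0 p) (H p) ∈ (fun q => max (F0 q) (H q)) '' Iic p :=
            ⟨p, self_mem_Iic, rfl⟩
          have hbb : BddBelow ((fun q => max (F0 q) (H q)) '' Iic p) :=
            ⟨H p, by rintro _ ⟨q, hq, rfl⟩; exact hlow q hq⟩
          have := csInf_le hbb hmem
          rwa [max_eq_right h0.le] at this
        · exact le_csInf ⟨_, p, self_mem_Iic, rfl⟩ (by rintro _ ⟨q, hq, rfl⟩; exact hlow q hq)
      rw [hsub, hsup]
  · rw [if_neg h1]
    have h0 : ¬ H p ≤ F0 p := fun h => h1 (h.trans (le_max_left _ _))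
    rw [if_neg h0]
    have hfun : (fun q => max (max (F0 q) (sInf (H '' Iic q))) (H q)) =
        fun q => max (F0 q) (H q) := funext fun q => by
      rw [max_assoc, max_eq_right (hmle q)]
    rw [hfun]
end
end

section
/- Let H : ℝ → ℝ be continuous and coercive and F0 : ℝ → ℝ be continuous, non-increasing and semi-coercive. Then (ℜF0)(p) ≤ F0(p) for every negative characteristic point p ∈ χ⁻(ℜF0), and (ℜF0)(p) ≥ F0(p) for every positive characteristic point p ∈ χ⁺(ℜF0). -/
open Set Filter

attribute [local instance] Classical.propDecidable

noncomputable section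

/-- Values of `ℜF0` at its characteristic points. -/
theorem relax_values_at_characteristic_points (H F0 : ℝ → ℝ)
    (hH : Continuous H) (hHc : Coercive H)
    (hF : Continuous F0) (hFa : Antitone F0) (hFs : SemiCoercive F0) (p : ℝ) :
    (negChar H (relax H F0) p → relax H F0 p ≤ F0 p) ∧
    (posChar H (relax H F0) p → F0 p ≤ relax H F0 p) := by
  have hbddA : BddAbove ((fun q => min (F0 q) (H q)) '' Ici p) := by
    refine ⟨F0 p, ?_⟩
    rintro x ⟨q, hq, rfl⟩
    exact le_trans (min_le_left _ _) (hFa hq)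
  have hbddB : BddBelow ((fun q => max (F0 q) (H q)) '' Iic p) := by
    refine ⟨F0 p, ?_⟩
    rintro x ⟨q, hq, rfl⟩
    exact le_trans (hFa hq) (le_max_left _ _)
  have hsub_le : subR H F0 p ≤ F0 p := by
    refine csSup_le ⟨_, ⟨p, self_mem_Ici, rfl⟩⟩ ?_
    rintro x ⟨q, hq, rfl⟩
    exact le_trans (min_le_left _ _) (hFa hq)
  constructor
  · rintro ⟨hval, ε, hε, hlt⟩
    by_cases hle : H p ≤ F0 p
    · simpa [relax, hle] using hsub_le
    · exfalso
      push_neg at hle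
      have hrel : relax H F0 p = supR H F0 p := by simp [relax, not_le.mpr hle]
      rw [hrel] at hval
      have hcont : ∀ᶠ q in nhds p, F0 q < H p :=
        (hF.continuousAt (x := p)).eventually_lt continuousAt_const hle
      obtain ⟨δ, hδ, hδ'⟩ := Metric.eventually_nhds_iff.mp hcont
      set q := p - min ε δ / 2 with hqdef
      have hm : 0 < min ε δ := lt_min hε hδ
      have hq1 : q < p := by simp only [hqdef]; linarith
      have hq2 : p - ε < q := by
        have := min_le_left ε δ
        simp only [hqdef]; linarith
      have hdist : dist q p < δ := by
        have := min_le_right ε δ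
        rw [Real.dist_eq]
        rw [abs_lt]
        constructor <;> (simp only [hqdef]; linarith)
      have hF0q : F0 q < H p := hδ' hdist
      have hHq : H q < H p := hlt q ⟨hq2, hq1⟩
      have : supR H F0 p ≤ max (F0 q) (H q) :=
        csInf_le hbddB ⟨q, le_of_lt hq1, rfl⟩
      have : supR H F0 p < H p := lt_of_le_of_lt this (max_lt hF0q hHq)
      linarith [hval ▸ this]
  · rintro ⟨hval, ε, hε, hlt⟩
    by_cases hle : H p ≤ F0 p
    · have hrel : relax H F0 p = subR H F0 p := by simp [relax, hle]
      rw [hrel] at hval ⊢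
      by_contra hcon
      push_neg at hcon
      have hlt2 : H p < F0 p := lt_of_le_of_lt (hval ▸ le_refl _) hcon
      have hcont : ∀ᶠ r in nhds p, H p < F0 r :=
        ContinuousAt.eventually_lt continuousAt_const (hF.continuousAt (x := p)) hlt2
      obtain ⟨δ, hδ, hδ'⟩ := Metric.eventually_nhds_iff.mp hcont
      set q := p + min ε δ / 2 with hqdef
      have hm : 0 < min ε δ := lt_min hε hδ
      have hq1 : p < q := by simp only [hqdef]; linarith
      have hq2 : q < p + ε := by
        have := min_le_left ε δ
        simp only [hqdef]; linarith
      have hdist : dist q p < δ := by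
        have := min_le_right ε δ
        rw [Real.dist_eq, abs_lt]
        constructor <;> (simp only [hqdef]; linarith)
      have hF0q : H p < F0 q := hδ' hdist
      have hHq : H p < H q := hlt q ⟨hq1, hq2⟩
      have hmem : min (F0 q) (H q) ∈ (fun q => min (F0 q) (H q)) '' Ici p :=
        ⟨q, le_of_lt hq1, rfl⟩
      have : min (F0 q) (H q) ≤ subR H F0 p := le_csSup hbddA hmem
      have : H p < subR H F0 p := lt_of_lt_of_le (lt_min hF0q hHq) this
      linarith [hval ▸ this]
    · push_neg at hle
      have hrel : relax H F0 p = supR H F0 p := by simp [relax, not_le.mpr hle]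
      rw [hrel] at hval ⊢
      rw [← hval]
      exact le_of_lt hle
end
end

section
/- Let H : ℝ → ℝ be continuous and coercive and F0 : ℝ → ℝ be continuous, non-increasing and semi-coercive. Then the characteristic points of the relaxed function coincide with the limiter points of F0: χ⁺(ℜF0) = A⁺_{F0} and χ⁻(ℜF0) = A⁻_{F0}. -/
open Set Filter

attribute [local instance] Classical.propDecidable

noncomputable section

/-! Both kinds of points are characterised by the same three conditions; for the positive
ones: `H` increases strictly to the right of `p`, `F0 p ≤ H p`, and `H p ≤ max (F0 q) (H q)` for
all `q ≤ p`. For `χ⁺(ℜF0)` the last condition says `ℜF0 p = R̄F0 p = H p`, and `F0 p > H p` is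
impossible because, with `F0` continuous, `min F0 H > H p` just to the right of `p`, so
`R̲F0 p > H p`. For `A⁺_{F0}` the first condition is `p < p⁺`, and the disjointness condition is
equivalent to the last one: when `p < q` the intervals `(p, p⁺)` and `(q⁻, q⁺)` can only meet if
`H p < H q`, while if `max (F0 q) (H q) < H p` for some `q < p`, the last minimiser `c` of
`max F0 H` on `[q, p]` satisfies `F0 c ≤ H c < H p` and `H > H c` on `(c, p]`, so `(c⁻, c⁺)`
meets `(p, p⁺)`. The negative case is the mirror image, with `min F0 H` and its first
maximiser. -/

section Extremizers

variable {α β : Type*} [LinearOrder α] [TopologicalSpace α] [OrderClosedTopology α]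
  [LinearOrder β] [TopologicalSpace β] [OrderClosedTopology β]

theorem IsCompact.exists_greatest_isMinOn {s : Set α} (hs : IsCompact s) (hne : s.Nonempty)
    {φ : α → β} (hφ : ContinuousOn φ s) :
    ∃ c ∈ s, IsMinOn φ s c ∧ ∀ t ∈ s, c < t → φ c < φ t := by
  obtain ⟨m, hm, hmin⟩ := hs.exists_isMinOn hne hφ
  have hK : IsCompact (s ∩ φ ⁻¹' {φ m}) :=
    hs.of_isClosed_subset (hφ.preimage_isClosed_of_isClosed hs.isClosed isClosed_singleton)
      inter_subset_left
  obtain ⟨c, ⟨hcs, hcm : φ c = φ m⟩, hc⟩ := hK.exists_isGreatest ⟨m, hm, rfl⟩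
  refine ⟨c, hcs, fun t ht => hcm ▸ hmin ht, fun t ht hct => ?_⟩
  exact (hcm ▸ hmin ht).lt_of_ne fun h => hct.not_ge (hc ⟨ht, h.symm.trans hcm⟩)

theorem IsCompact.exists_least_isMaxOn {s : Set α} (hs : IsCompact s) (hne : s.Nonempty)
    {φ : α → β} (hφ : ContinuousOn φ s) :
    ∃ c ∈ s, IsMaxOn φ s c ∧ ∀ t ∈ s, t < c → φ t < φ c :=
  IsCompact.exists_greatest_isMinOn (α := αᵒᵈ) (β := βᵒᵈ) hs hne hφ

end Extremizers

section LowerUpperPoints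

variable {H : ℝ → ℝ}

theorem apply_lt_of_lt_upperPt {x r : ℝ} (hxr : x < r) (hr : (r : EReal) < upperPt H x) :
    H x < H r := by
  unfold upperPt at hr
  split_ifs at hr
  · exact absurd hr (EReal.coe_le_coe_iff.2 hxr.le).not_gt
  · obtain ⟨_, ⟨q, hq, rfl⟩, hrq⟩ := lt_sSup_iff.1 hr
    exact hq.2 r ⟨hxr, EReal.coe_lt_coe_iff.1 hrq⟩

theorem apply_lt_of_lowerPt_lt {x r : ℝ} (hr : lowerPt H x < r) (hrx : r < x) : H r < H x := by
  unfold lowerPt at hr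
  split_ifs at hr with h
  · exact absurd hrx hr.not_gt
  · push Not at h
    obtain ⟨ε, hε, hq⟩ := h
    obtain ⟨q, hq', hqr⟩ :=
      exists_lt_of_csInf_lt
        (⟨x - ε, by linarith, fun t ht => hq t ht.1 ht.2⟩ :
          {q : ℝ | q < x ∧ ∀ r ∈ Ioo q x, H r < H x}.Nonempty) hr
    exact hq'.2 r ⟨hqr, hrx⟩

theorem coe_le_upperPt {x y : ℝ} (hxy : x < y) (h : ∀ t ∈ Ioo x y, H x < H t) :
    (y : EReal) ≤ upperPt H x := by
  rw [upperPt, if_neg]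
  · exact le_sSup ⟨y, ⟨hxy, h⟩, rfl⟩
  · intro hc
    obtain ⟨q, hxq, hqy, hq⟩ := hc (y - x) (sub_pos.2 hxy)
    exact (h q ⟨hxq, by linarith⟩).not_ge hq

theorem le_upperPt (x : ℝ) : (x : EReal) ≤ upperPt H x := by
  by_cases h : ∀ ε > 0, ∃ q, x < q ∧ q < x + ε ∧ H q ≤ H x
  · rw [upperPt, if_pos h]
  · push Not at h
    obtain ⟨ε, hε, hq⟩ := h
    exact (EReal.coe_le_coe_iff.2 (by linarith)).trans
      (coe_le_upperPt (by linarith : x < x + ε) fun t ht => hq t ht.1 ht.2)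

theorem bddBelow_lowerPt_set (hHc : Coercive H) (x : ℝ) :
    BddBelow {q : ℝ | q < x ∧ ∀ r ∈ Ioo q x, H r < H x} := by
  obtain ⟨M, hM⟩ : ∃ M, ∀ y ≤ M, H x ≤ H y :=
    eventually_atBot.1 ((Tendsto.mono_left hHc atBot_le_cocompact).eventually_ge_atTop (H x))
  refine ⟨min M x, fun q hq => le_of_not_gt fun hlt => ?_⟩
  have hmid := hq.2 ((q + min M x) / 2) ⟨by linarith, by linarith [min_le_right M x]⟩
  linarith [hM ((q + min M x) / 2) (by linarith [min_le_left M x])]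

theorem lowerPt_le_of_forall (hHc : Coercive H) {x y : ℝ} (hyx : y < x)
    (h : ∀ t ∈ Ioo y x, H t < H x) : lowerPt H x ≤ y := by
  rw [lowerPt, if_neg]
  · exact csInf_le (bddBelow_lowerPt_set hHc x) ⟨hyx, h⟩
  · intro hc
    obtain ⟨q, hyq, hqx, hq⟩ := hc (x - y) (sub_pos.2 hyx)
    exact (h q ⟨by linarith, hqx⟩).not_ge hq

theorem lowerPt_le (hHc : Coercive H) (x : ℝ) : lowerPt H x ≤ x := by
  by_cases h : ∀ ε > 0, ∃ q, x - ε < q ∧ q < x ∧ H x ≤ H q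
  · rw [lowerPt, if_pos h]
  · push Not at h
    obtain ⟨ε, hε, hq⟩ := h
    exact (lowerPt_le_of_forall hHc (by linarith : x - ε < x) fun t ht => hq t ht.1 ht.2).trans
      (by linarith)

theorem coe_lt_upperPt_iff {x : ℝ} :
    (x : EReal) < upperPt H x ↔ ∃ ε > 0, ∀ t ∈ Ioo x (x + ε), H x < H t := by
  constructor
  · intro h
    obtain ⟨r, hxr, hr⟩ := EReal.lt_iff_exists_real_btwn.1 h
    have hxr : x < r := EReal.coe_lt_coe_iff.1 hxr
    refine ⟨r - x, sub_pos.2 hxr, fun t ht => apply_lt_of_lt_upperPt ht.1 ?_⟩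
    exact (EReal.coe_lt_coe_iff.2 (by linarith [ht.2])).trans hr
  · rintro ⟨ε, hε, h⟩
    exact (EReal.coe_lt_coe_iff.2 (by linarith)).trans_le (coe_le_upperPt (by linarith) h)

theorem lowerPt_lt_iff (hHc : Coercive H) {x : ℝ} :
    lowerPt H x < x ↔ ∃ ε > 0, ∀ t ∈ Ioo (x - ε) x, H t < H x := by
  constructor
  · intro h
    exact ⟨x - lowerPt H x, sub_pos.2 h,
      fun t ht => apply_lt_of_lowerPt_lt (by linarith [ht.1]) ht.2⟩
  · rintro ⟨ε, hε, h⟩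
    exact (lowerPt_le_of_forall hHc (by linarith) h).trans_lt (by linarith)

theorem apply_lt_of_lowerPt_lt_of_lt_upperPt {x y r : ℝ} (hxy : x < y) (hy : lowerPt H y < r)
    (hx : (r : EReal) < upperPt H x) : H x < H y := by
  rcases le_or_gt r x with hrx | hxr
  · exact apply_lt_of_lowerPt_lt (hy.trans_le hrx) hxy
  rcases le_or_gt y r with hyr | hry
  · exact apply_lt_of_lt_upperPt hxy ((EReal.coe_le_coe_iff.2 hyr).trans_lt hx)
  · exact (apply_lt_of_lt_upperPt hxr hx).trans (apply_lt_of_lowerPt_lt hy hry)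

end LowerUpperPoints

section Relaxation

variable {H F0 : ℝ → ℝ} {p : ℝ}

theorem relax_eq_iff_of_le (hFa : Antitone F0) (hp : H p ≤ F0 p) :
    relax H F0 p = H p ↔ ∀ q ≥ p, min (F0 q) (H q) ≤ H p := by
  have hbdd : BddAbove ((fun q => min (F0 q) (H q)) '' Ici p) :=
    ⟨F0 p, forall_mem_image.2 fun q hq => (min_le_left _ _).trans (hFa hq)⟩
  rw [relax, if_pos hp, subR]
  refine ⟨fun h q hq => h ▸ le_csSup hbdd (mem_image_of_mem _ hq), fun h => ?_⟩
  exact IsGreatest.csSup_eq ⟨⟨p, self_mem_Ici, min_eq_right hp⟩, forall_mem_image.2 h⟩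

theorem relax_eq_iff_of_ge (hFa : Antitone F0) (hp : F0 p ≤ H p) :
    relax H F0 p = H p ↔ ∀ q ≤ p, H p ≤ max (F0 q) (H q) := by
  rcases hp.lt_or_eq with hlt | heq
  · have hbdd : BddBelow ((fun q => max (F0 q) (H q)) '' Iic p) :=
      ⟨F0 p, forall_mem_image.2 fun q hq => (hFa hq).trans (le_max_left _ _)⟩
    rw [relax, if_neg hlt.not_ge, supR]
    refine ⟨fun h q hq => h ▸ csInf_le hbdd (mem_image_of_mem _ hq), fun h => ?_⟩
    exact IsLeast.csInf_eq ⟨⟨p, self_mem_Iic, max_eq_right hp⟩, forall_mem_image.2 h⟩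
  · refine iff_of_true ((relax_eq_iff_of_le hFa heq.ge).2 fun q hq => ?_) fun q hq => ?_
    · exact (min_le_left _ _).trans (heq ▸ hFa hq)
    · exact (heq ▸ hFa hq).trans (le_max_left _ _)

theorem apply_le_of_posChar_relax (hF : Continuous F0) (hFa : Antitone F0)
    (h : posChar H (relax H F0) p) : F0 p ≤ H p := by
  obtain ⟨hEq, ε, hε, hinc⟩ := h
  by_contra! hlt
  obtain ⟨t, hFt, ht⟩ := (((hF.continuousAt.eventually (lt_mem_nhds hlt)).filter_mono
    nhdsWithin_le_nhds).and (Ioo_mem_nhdsGT (by linarith : p < p + ε))).exists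
  exact (lt_min hFt (hinc t ht)).not_ge
    ((relax_eq_iff_of_le hFa hlt.le).1 hEq.symm t ht.1.le)

theorem apply_le_of_negChar_relax (hF : Continuous F0) (hFa : Antitone F0)
    (h : negChar H (relax H F0) p) : H p ≤ F0 p := by
  obtain ⟨hEq, ε, hε, hdec⟩ := h
  by_contra! hlt
  obtain ⟨t, hFt, ht⟩ := (((hF.continuousAt.eventually (gt_mem_nhds hlt)).filter_mono
    nhdsWithin_le_nhds).and (Ioo_mem_nhdsLT (by linarith : p - ε < p))).exists
  exact (max_lt hFt (hdec t ht)).not_ge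
    ((relax_eq_iff_of_ge hFa hlt.le).1 hEq.symm t ht.2.le)

theorem posChar_relax_iff (hF : Continuous F0) (hFa : Antitone F0) :
    posChar H (relax H F0) p ↔
      (∃ ε > 0, ∀ t ∈ Ioo p (p + ε), H p < H t) ∧ F0 p ≤ H p ∧ ∀ q ≤ p, H p ≤ max (F0 q) (H q) := by
  refine ⟨fun h => ?_, fun ⟨hinc, hle, hmax⟩ =>
    ⟨((relax_eq_iff_of_ge hFa hle).2 hmax).symm, hinc⟩⟩
  have hle := apply_le_of_posChar_relax hF hFa h
  exact ⟨h.2, hle, (relax_eq_iff_of_ge hFa hle).1 h.1.symm⟩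

theorem negChar_relax_iff (hF : Continuous F0) (hFa : Antitone F0) :
    negChar H (relax H F0) p ↔
      (∃ ε > 0, ∀ t ∈ Ioo (p - ε) p, H t < H p) ∧ H p ≤ F0 p ∧ ∀ q ≥ p, min (F0 q) (H q) ≤ H p := by
  refine ⟨fun h => ?_, fun ⟨hdec, hle, hmin⟩ =>
    ⟨((relax_eq_iff_of_le hFa hle).2 hmin).symm, hdec⟩⟩
  have hle := apply_le_of_negChar_relax hF hFa h
  exact ⟨h.2, hle, (relax_eq_iff_of_le hFa hle).1 h.1.symm⟩

end Relaxation

section LimiterPoints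

variable {H F0 : ℝ → ℝ} {p : ℝ}

theorem exists_apply_le_of_max_lt (hH : Continuous H) (hF : Continuous F0) (hFa : Antitone F0)
    {q : ℝ} (hqp : q ≤ p) (h : max (F0 q) (H q) < H p) :
    ∃ c ∈ Ico q p, F0 c ≤ H c ∧ H c < H p ∧ ∀ t ∈ Ioc c p, H c < H t := by
  obtain ⟨c, hc, hmin, hlast⟩ :=
    isCompact_Icc.exists_greatest_isMinOn (nonempty_Icc.2 hqp) (hF.max hH).continuousOn
  have hcp' : max (F0 c) (H c) < H p := (hmin (left_mem_Icc.2 hqp)).trans_lt h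
  have hcp : c < p := hc.2.lt_of_ne (by rintro rfl; exact hcp'.not_ge (le_max_right _ _))
  have hright : ∀ t ∈ Ioc c p, max (F0 c) (H c) < H t := fun t ht => by
    rcases lt_max_iff.1 (hlast t ⟨hc.1.trans ht.1.le, ht.2⟩ ht.1) with hF0 | hH0
    · exact absurd hF0 ((hFa ht.1.le).trans (le_max_left _ _)).not_gt
    · exact hH0
  have hlim : max (F0 c) (H c) ≤ H c :=
    ge_of_tendsto (hH.continuousAt.tendsto.mono_left nhdsWithin_le_nhds)
      (eventually_of_mem (Ioc_mem_nhdsGT hcp) fun t ht => (hright t ht).le)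
  have hFc : F0 c ≤ H c := (le_max_left _ _).trans hlim
  rw [max_eq_right hFc] at hcp' hright
  exact ⟨c, ⟨hc.1, hcp⟩, hFc, hcp', hright⟩

theorem exists_le_apply_of_lt_min (hH : Continuous H) (hF : Continuous F0) (hFa : Antitone F0)
    {q : ℝ} (hpq : p ≤ q) (h : H p < min (F0 q) (H q)) :
    ∃ c ∈ Ioc p q, H c ≤ F0 c ∧ H p < H c ∧ ∀ t ∈ Ico p c, H t < H c := by
  obtain ⟨c, hc, hmax, hfirst⟩ :=
    isCompact_Icc.exists_least_isMaxOn (nonempty_Icc.2 hpq) (hF.min hH).continuousOn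
  have hpc' : H p < min (F0 c) (H c) := h.trans_le (hmax (right_mem_Icc.2 hpq))
  have hpc : p < c := hc.1.lt_of_ne' (by rintro rfl; exact hpc'.not_ge (min_le_right _ _))
  have hleft : ∀ t ∈ Ico p c, H t < min (F0 c) (H c) := fun t ht => by
    rcases min_lt_iff.1 (hfirst t ⟨ht.1, ht.2.le.trans hc.2⟩ ht.2) with hF0 | hH0
    · exact absurd hF0 ((min_le_left _ _).trans (hFa ht.2.le)).not_gt
    · exact hH0
  have hlim : H c ≤ min (F0 c) (H c) :=
    le_of_tendsto (hH.continuousAt.tendsto.mono_left nhdsWithin_le_nhds)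
      (eventually_of_mem (Ico_mem_nhdsLT hpc) fun t ht => (hleft t ht).le)
  have hHc : H c ≤ F0 c := hlim.trans (min_le_left _ _)
  rw [min_eq_right hHc] at hpc' hleft
  exact ⟨c, ⟨hpc, hc.2⟩, hHc, hpc', hleft⟩

theorem posLimiter_iff (hH : Continuous H) (hHc : Coercive H) (hF : Continuous F0)
    (hFa : Antitone F0) :
    posLimiter H F0 p ↔
      (∃ ε > 0, ∀ t ∈ Ioo p (p + ε), H p < H t) ∧ F0 p ≤ H p ∧ ∀ q ≤ p, H p ≤ max (F0 q) (H q) := by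
  rw [posLimiter, coe_lt_upperPt_iff]
  refine and_congr_right fun ⟨ε, hε, hinc⟩ => and_congr_right fun _ =>
    ⟨fun hdisj q hqp => ?_, fun hmax q hqp hFq =>
      eq_empty_iff_forall_notMem.2 fun r ⟨⟨hqr, _⟩, _, hrp⟩ => ?_⟩
  · by_contra! h
    obtain ⟨c, hc, hFc, hcp, hright⟩ := exists_apply_le_of_max_lt hH hF hFa hqp h
    have hcε : ((p + ε : ℝ) : EReal) ≤ upperPt H c := by
      refine coe_le_upperPt (by linarith [hc.2]) fun t ht => ?_
      rcases le_or_gt t p with htp | hpt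
      · exact hright t ⟨ht.1, htp⟩
      · exact hcp.trans (hinc t ⟨hpt, ht.2⟩)
    have hpε : ((p + ε : ℝ) : EReal) ≤ upperPt H p := coe_le_upperPt (by linarith) hinc
    have hmid : ((p + ε / 2 : ℝ) : EReal) < ((p + ε : ℝ) : EReal) :=
      EReal.coe_lt_coe_iff.2 (by linarith)
    have hlow : lowerPt H c < p + ε / 2 := by linarith [lowerPt_le hHc c, hc.2]
    exact eq_empty_iff_forall_notMem.1 (hdisj c hcp hFc) (p + ε / 2)
      ⟨⟨hlow, hmid.trans_le hcε⟩, by linarith, hmid.trans_le hpε⟩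
  · rcases le_or_gt q p with hq | hq
    · exact hqp.not_ge ((hmax q hq).trans_eq (max_eq_right hFq))
    · exact hqp.not_gt (apply_lt_of_lowerPt_lt_of_lt_upperPt hq hqr hrp)

theorem negLimiter_iff (hH : Continuous H) (hHc : Coercive H) (hF : Continuous F0)
    (hFa : Antitone F0) :
    negLimiter H F0 p ↔
      (∃ ε > 0, ∀ t ∈ Ioo (p - ε) p, H t < H p) ∧ H p ≤ F0 p ∧ ∀ q ≥ p, min (F0 q) (H q) ≤ H p := by
  rw [negLimiter, lowerPt_lt_iff hHc]
  refine and_congr_right fun ⟨ε, hε, hdec⟩ => and_congr_right fun _ =>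
    ⟨fun hdisj q hpq => ?_, fun hmin q hFq hpq =>
      eq_empty_iff_forall_notMem.2 fun r ⟨⟨_, hrq⟩, hpr, _⟩ => ?_⟩
  · by_contra! h
    obtain ⟨c, hc, hHFc, hpc, hleft⟩ := exists_le_apply_of_lt_min hH hF hFa hpq h
    have hcε : lowerPt H c ≤ p - ε := by
      refine lowerPt_le_of_forall hHc (by linarith [hc.1]) fun t ht => ?_
      rcases lt_or_ge t p with htp | hpt
      · exact (hdec t ⟨ht.1, htp⟩).trans hpc
      · exact hleft t ⟨hpt, ht.2⟩
    have hpε : lowerPt H p ≤ p - ε := lowerPt_le_of_forall hHc (by linarith) hdec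
    have hmid : ((p - ε / 2 : ℝ) : EReal) < upperPt H c :=
      (EReal.coe_lt_coe_iff.2 (by linarith [hc.1])).trans_le (le_upperPt c)
    exact eq_empty_iff_forall_notMem.1 (hdisj c hHFc hpc) (p - ε / 2)
      ⟨⟨by linarith, hmid⟩, by linarith, by linarith⟩
  · rcases le_or_gt p q with hq | hq
    · exact hpq.not_ge ((min_eq_right hFq).symm.trans_le (hmin q hq))
    · exact hpq.not_gt (apply_lt_of_lowerPt_lt_of_lt_upperPt hq hpr hrq)

end LimiterPoints

theorem limiter_points_eq_characteristic_points_general (H F0 : ℝ → ℝ)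
    (hH : Continuous H) (hHc : Coercive H)
    (hF : Continuous F0) (hFa : Antitone F0) :
    (∀ p : ℝ, posChar H (relax H F0) p ↔ posLimiter H F0 p) ∧
    (∀ p : ℝ, negChar H (relax H F0) p ↔ negLimiter H F0 p) :=
  ⟨fun _ => (posChar_relax_iff hF hFa).trans (posLimiter_iff hH hHc hF hFa).symm,
    fun _ => (negChar_relax_iff hF hFa).trans (negLimiter_iff hH hHc hF hFa).symm⟩

/-- Limiter points of `F0` coincide with characteristic points of the relaxed function. -/
theorem limiter_points_eq_characteristic_points (H F0 : ℝ → ℝ)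
    (hH : Continuous H) (hHc : Coercive H)
    (hF : Continuous F0) (hFa : Antitone F0) (hFs : SemiCoercive F0) :
    (∀ p : ℝ, posChar H (relax H F0) p ↔ posLimiter H F0 p) ∧
    (∀ p : ℝ, negChar H (relax H F0) p ↔ negLimiter H F0 p) :=
  limiter_points_eq_characteristic_points_general H F0 hH hHc hF hFa
end
end

section
/- Let H : ℝ → ℝ be continuous and coercive and F0 : ℝ → ℝ be continuous, non-increasing and semi-coercive. Then for every p ∈ ℝ there exists q ∈ ℝ such that F0(q) = G(q,p); moreover the common value is independent of q: if F0(q₁) = G(q₁,p) and F0(q₂) = G(q₂,p), then F0(q₁) = F0(q₂). -/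
/-!
Fix `p`. The map `q ↦ G(q,p)` is continuous (an extremum of `H` over the segment `[[p, q]]`) and
non-decreasing, while `F0` is continuous and non-increasing. As `q → -∞`, `G(q,p) ≤ H p` while
`F0 q → +∞`; as `q → +∞`, `G(q,p) ≥ H q → +∞` while `F0 q ≤ F0 p`. The intermediate value theorem
gives a crossing point, and a non-decreasing and a non-increasing function can only meet at one
common value.
-/

open Set Filter

attribute [local instance] Classical.propDecidable

noncomputable section

section SegmentExtrema

variable {α : Type*} [ConditionallyCompleteLinearOrder α] [TopologicalSpace α] [OrderTopology α]
  {H : ℝ → α}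

/-- `[[p, q]]` is the image of `[0, 1]` under `AffineMap.lineMap p q`, so this is
`IsCompact.continuous_sSup` over the fixed compact set `[0, 1]`. -/
theorem continuous_sSup_image_uIcc (hH : Continuous H) (p : ℝ) :
    Continuous fun q => sSup (H '' uIcc p q) := by
  simp_rw [← segment_eq_uIcc (𝕜 := ℝ), segment_eq_image_lineMap, image_image]
  exact isCompact_Icc.continuous_sSup (by fun_prop)

theorem continuous_sInf_image_uIcc (hH : Continuous H) (p : ℝ) :
    Continuous fun q => sInf (H '' uIcc p q) :=
  continuous_sSup_image_uIcc (α := αᵒᵈ) hH p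

end SegmentExtrema

theorem Antitone.eq_of_eq_of_monotone {α β : Type*} [LinearOrder α] [PartialOrder β]
    {f g : α → β} (hg : Antitone g) (hf : Monotone f) {x y : α} (hx : f x = g x)
    (hy : f y = g y) : g x = g y := by
  wlog hxy : x ≤ y generalizing x y
  · exact (this hy hx (le_of_not_ge hxy)).symm
  exact le_antisymm (by rw [← hx, ← hy]; exact hf hxy) (hg hxy)

section Godunov

variable {H : ℝ → ℝ} {p q : ℝ}

theorem godunov_of_le (h : p ≤ q) : godunov H q p = sSup (H '' Icc p q) := if_pos h

theorem godunov_of_ge (h : q ≤ p) : godunov H q p = sInf (H '' Icc q p) := by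
  rcases h.eq_or_lt with rfl | hlt
  · simp [godunov]
  · exact if_neg hlt.not_ge

theorem godunov_eq_ite_uIcc (H : ℝ → ℝ) (q p : ℝ) :
    godunov H q p = if p ≤ q then sSup (H '' uIcc p q) else sInf (H '' uIcc p q) := by
  unfold godunov
  split_ifs with h
  · rw [uIcc_of_le h]
  · rw [uIcc_of_gt (not_le.1 h)]

theorem continuous_godunov_left (hH : Continuous H) (p : ℝ) :
    Continuous fun q => godunov H q p := by
  simp_rw [godunov_eq_ite_uIcc]
  refine (continuous_sSup_image_uIcc hH p).if_le (continuous_sInf_image_uIcc hH p)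
    continuous_const continuous_id fun q hpq => ?_
  simp [← hpq]

theorem le_godunov_of_mem_Icc (hH : Continuous H) {r : ℝ} (hr : r ∈ Icc p q) :
    H r ≤ godunov H q p := by
  rw [godunov_of_le (hr.1.trans hr.2)]
  exact le_csSup (isCompact_Icc.image hH).bddAbove (mem_image_of_mem H hr)

theorem godunov_le_of_mem_Icc (hH : Continuous H) {r : ℝ} (hr : r ∈ Icc q p) :
    godunov H q p ≤ H r := by
  rw [godunov_of_ge (hr.1.trans hr.2)]
  exact csInf_le (isCompact_Icc.image hH).bddBelow (mem_image_of_mem H hr)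

theorem monotone_godunov_left (hH : Continuous H) (p : ℝ) :
    Monotone fun q => godunov H q p := by
  intro q₁ q₂ hq
  show godunov H q₁ p ≤ godunov H q₂ p
  rcases le_total p q₁ with h₁ | h₁
  · rw [godunov_of_le h₁, godunov_of_le (h₁.trans hq)]
    exact csSup_le_csSup (isCompact_Icc.image hH).bddAbove ((nonempty_Icc.2 h₁).image H)
      (image_mono (Icc_subset_Icc_right hq))
  rcases le_total p q₂ with h₂ | h₂
  · exact (godunov_le_of_mem_Icc hH ⟨h₁, le_rfl⟩).trans (le_godunov_of_mem_Icc hH ⟨le_rfl, h₂⟩)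
  · rw [godunov_of_ge h₁, godunov_of_ge h₂]
    exact csInf_le_csInf (isCompact_Icc.image hH).bddBelow ((nonempty_Icc.2 h₂).image H)
      (image_mono (Icc_subset_Icc_left hq))

theorem eventually_godunov_le_atBot {F : ℝ → ℝ} (hH : Continuous H) (hF : SemiCoercive F)
    (p : ℝ) : ∀ᶠ q in atBot, godunov H q p ≤ F q := by
  filter_upwards [eventually_le_atBot p, hF.eventually_ge_atTop (H p)] with q hqp hFq
  exact (godunov_le_of_mem_Icc hH ⟨hqp, le_rfl⟩).trans hFq

theorem eventually_le_godunov_atTop {F : ℝ → ℝ} (hH : Continuous H) (hHc : Coercive H)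
    (hF : Antitone F) (p : ℝ) : ∀ᶠ q in atTop, F q ≤ godunov H q p := by
  filter_upwards [eventually_ge_atTop p,
    (hHc.mono_left atTop_le_cocompact).eventually_ge_atTop (F p)] with q hpq hHq
  exact (hF hpq).trans (hHq.trans (le_godunov_of_mem_Icc hH ⟨hpq, le_rfl⟩))

end Godunov

/-- Godunov's operator is well defined: existence and uniqueness of the common value. -/
theorem godunov_action_well_defined (H F0 : ℝ → ℝ)
    (hH : Continuous H) (hHc : Coercive H)
    (hF : Continuous F0) (hFa : Antitone F0) (hFs : SemiCoercive F0) (p : ℝ) :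
    (∃ q : ℝ, F0 q = godunov H q p) ∧
    (∀ q₁ q₂ : ℝ, F0 q₁ = godunov H q₁ p → F0 q₂ = godunov H q₂ p → F0 q₁ = F0 q₂) := by
  refine ⟨?_, fun q₁ q₂ h₁ h₂ =>
    hFa.eq_of_eq_of_monotone (monotone_godunov_left hH p) h₁.symm h₂.symm⟩
  obtain ⟨q, hq⟩ := intermediate_value_univ₂_eventually₂ (continuous_godunov_left hH p) hF
    (eventually_godunov_le_atBot hH hFs p) (eventually_le_godunov_atTop hH hHc hFa p)
  exact ⟨q, hq.symm⟩
end
end
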